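/- arXiv:1702.05933 — 3 statements merged into one kernel-verified Lean document; each statement's English description precedes it below -/
import Mathlib

section
/- Let (a_i)_{i∈ℕ} ⊂ ℝ be a bounded sequence with a_i → a. Let (Z_i)_{i∈ℕ} be independent random variables with Z_i ∼ N(a_i, 1). Then for every Borel set B ⊆ ℝ, the averages (1/n)∑_{i=1}^n P(Z_i ∈ B) converge to N(a,1)(B) as n → ∞. -/
/-!
The probabilities `P(Z i ∈ B) = N(a i, 1)(B)` only involve the marginal laws, so it suffices that
`m ↦ N(m, v)(B)` is continuous (then `N(a i, 1)(B) → N(l, 1)(B)` and Cesàro means preserve limits).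
Continuity follows from dominated convergence applied to `∫_B` of the Gaussian density: for
`|m| ≤ c`, the density with mean `m` is dominated by a multiple of the sum of the densities with
means `c` and `-c`.
-/

open MeasureTheory ProbabilityTheory Filter Topology Real
open scoped ENNReal NNReal

lemma exp_neg_sq_sub_div_le_of_abs_le {m c v : ℝ} (hm : |m| ≤ c) (hv : 0 ≤ v) (x : ℝ) :
    exp (-(x - m) ^ 2 / (2 * v)) ≤
      exp (c ^ 2 / (2 * v)) * (exp (-(x - c) ^ 2 / (2 * v)) + exp (-(x + c) ^ 2 / (2 * v))) := by
  have hmx : m * x ≤ c * |x| := (le_abs_self _).trans <| by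
    rw [abs_mul]; exact mul_le_mul_of_nonneg_right hm (abs_nonneg x)
  have key : -(x - m) ^ 2 ≤ c ^ 2 + max (-(x - c) ^ 2) (-(x + c) ^ 2) := by
    rcases abs_cases x with ⟨hx, -⟩ | ⟨hx, -⟩ <;> rw [hx] at hmx
    · nlinarith [le_max_left (-(x - c) ^ 2) (-(x + c) ^ 2), sq_nonneg m]
    · nlinarith [le_max_right (-(x - c) ^ 2) (-(x + c) ^ 2), sq_nonneg m]
  calc exp (-(x - m) ^ 2 / (2 * v))
      ≤ exp (c ^ 2 / (2 * v) + max (-(x - c) ^ 2 / (2 * v)) (-(x + c) ^ 2 / (2 * v))) := by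
        rw [max_div_div_right (by positivity), ← add_div]
        gcongr
    _ ≤ _ := by
        rw [exp_add, exp_monotone.map_max]
        gcongr
        exact max_le_add_of_nonneg (exp_nonneg _) (exp_nonneg _)

lemma gaussianPDFReal_le_of_abs_le {m c : ℝ} (hm : |m| ≤ c) (v : ℝ≥0) (x : ℝ) :
    gaussianPDFReal m v x ≤
      exp (c ^ 2 / (2 * v)) * (gaussianPDFReal c v x + gaussianPDFReal (-c) v x) := by
  simp only [gaussianPDFReal, sub_neg_eq_add]
  calc _ ≤ (√(2 * π * v))⁻¹ * (exp (c ^ 2 / (2 * v)) *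
        (exp (-(x - c) ^ 2 / (2 * v)) + exp (-(x + c) ^ 2 / (2 * v)))) := by
        gcongr
        exact exp_neg_sq_sub_div_le_of_abs_le hm v.coe_nonneg x
    _ = _ := by ring

lemma continuous_gaussianPDFReal_mean (v : ℝ≥0) (x : ℝ) :
    Continuous fun m => gaussianPDFReal m v x := by
  unfold gaussianPDFReal
  fun_prop

lemma continuous_gaussianReal_apply_toReal {v : ℝ≥0} (hv : v ≠ 0) (B : Set ℝ) :
    Continuous fun m => (gaussianReal m v B).toReal := by
  have h_eq (m : ℝ) : (gaussianReal m v B).toReal = ∫ x in B, gaussianPDFReal m v x := by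
    rw [gaussianReal_apply_eq_integral m hv,
      ENNReal.toReal_ofReal (integral_nonneg fun x => gaussianPDFReal_nonneg _ _ _)]
  simp only [h_eq]
  refine continuous_iff_continuousAt.2 fun m₀ => ?_
  set c := |m₀| + 1
  refine continuousAt_of_dominated
    (bound := fun x => exp (c ^ 2 / (2 * v)) * (gaussianPDFReal c v x + gaussianPDFReal (-c) v x))
    (Eventually.of_forall fun m => (measurable_gaussianPDFReal m v).aestronglyMeasurable.restrict)
    ?_ ?_ (ae_of_all _ fun x => (continuous_gaussianPDFReal_mean v x).continuousAt)
  · filter_upwards [Metric.ball_mem_nhds m₀ one_pos] with m hm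
    refine ae_of_all _ fun x => ?_
    rw [norm_of_nonneg (gaussianPDFReal_nonneg _ _ _)]
    refine gaussianPDFReal_le_of_abs_le ?_ v x
    rw [Metric.mem_ball, dist_eq_norm, norm_eq_abs] at hm
    linarith [abs_sub_abs_le_abs_sub m m₀]
  · exact (((integrable_gaussianPDFReal c v).add
      (integrable_gaussianPDFReal (-c) v)).const_mul _).restrict

theorem cesaro_gaussian_probabilities_general
    {Ω : Type*} [MeasurableSpace Ω] (μ : Measure Ω)
    (a : ℕ → ℝ) (l : ℝ)
    (ha : Tendsto a atTop (𝓝 l))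
    (Z : ℕ → Ω → ℝ) (hmeas : ∀ i, Measurable (Z i))
    (hlaw : ∀ i, μ.map (Z i) = gaussianReal (a i) 1)
    (B : Set ℝ) (hB : MeasurableSet B) :
    Tendsto (fun n : ℕ => ((1 : ℝ) / n) * ∑ i ∈ Finset.range n, (μ (Z i ⁻¹' B)).toReal)
      atTop (𝓝 ((gaussianReal l 1 B).toReal)) := by
  have h_prob (i : ℕ) : μ (Z i ⁻¹' B) = gaussianReal (a i) 1 B := by
    rw [← hlaw i, Measure.map_apply (hmeas i) hB]
  simp only [h_prob, one_div]
  exact (((continuous_gaussianReal_apply_toReal one_ne_zero B).tendsto l).comp ha).cesaro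

/-- Let `(a i)` be a bounded real sequence with `a i → l`, and let `(Z i)` be
independent random variables with `Z i ∼ N(a i, 1)`.  Then for every Borel set
`B ⊆ ℝ` the averages `(1/n) ∑_{i<n} P(Z i ∈ B)` converge to `N(l,1)(B)`. -/
theorem cesaro_gaussian_probabilities
    {Ω : Type*} [MeasurableSpace Ω] (μ : Measure Ω) [IsProbabilityMeasure μ]
    (a : ℕ → ℝ) (c : ℝ) (hbd : ∀ i, |a i| ≤ c) (l : ℝ)
    (ha : Tendsto a atTop (𝓝 l))
    (Z : ℕ → Ω → ℝ) (hmeas : ∀ i, Measurable (Z i))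
    (hindep : iIndepFun Z μ)
    (hlaw : ∀ i, μ.map (Z i) = gaussianReal (a i) 1)
    (B : Set ℝ) (hB : MeasurableSet B) :
    Tendsto (fun n : ℕ => ((1 : ℝ) / n) * ∑ i ∈ Finset.range n, (μ (Z i ⁻¹' B)).toReal)
      atTop (𝓝 ((gaussianReal l 1 B).toReal)) :=
  cesaro_gaussian_probabilities_general μ a l ha Z hmeas hlaw B hB
end

section
/- Let (Z, d) be a metric space, n ∈ ℕ, and w = (z_1,…,z_n), w' = (z'_1,…,z'_n) ∈ Z^n. If d_n(w, w') ≤ δ for the metric d_n(w, w') = inf{ ε > 0 : #{i : d(z_i, z'_i) ≥ ε}/n ≤ ε }, then the Prohorov distance between the empirical measures satisfies π((1/n)∑_{i=1}^n δ_{z_i}, (1/n)∑_{i=1}^n δ_{z'_i}) ≤ δ. -/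
open scoped ENNReal
open Classical

/-- The gross-error metric on `Z^n`:
`d_n(w,w') = inf{ ε > 0 : #{i : d(w i, w' i) ≥ ε}/n ≤ ε }`. -/
noncomputable def dn {Z : Type*} [MetricSpace Z] (n : ℕ) (w w' : Fin n → Z) : ℝ :=
  sInf {ε : ℝ | 0 < ε ∧
    (((Finset.univ.filter fun i : Fin n => ε ≤ dist (w i) (w' i)).card : ℝ) / n ≤ ε)}

open MeasureTheory

/-- The Prohorov distance between two measures on a metric space:
`π(P,Q) = inf{ ε > 0 : P(B) ≤ Q(Bᵉ) + ε for all Borel B }`. -/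
noncomputable def prohorov {Z : Type*} [MetricSpace Z] [MeasurableSpace Z]
    (P Q : Measure Z) : ℝ :=
  sInf {ε : ℝ | 0 < ε ∧ ∀ B : Set Z, MeasurableSet B →
    P B ≤ Q (Metric.thickening ε B) + ENNReal.ofReal ε}

/-! If `w i ∈ B`, then either `w' i` lies in the `ε`-thickening of `B` or `d(w i, w' i) ≥ ε`.
Hence, for every `ε` admissible in the infimum defining `d_n`, the empirical mass of `B` under `w`
is at most that of the thickening under `w'` plus `ε`, so `ε` is admissible for the Prohorov
distance as well. -/

open Metric Finset

noncomputable def empiricalMeasure {Z : Type*} [MeasurableSpace Z] (n : ℕ) (v : Fin n → Z) :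
    Measure Z :=
  (n : ℝ≥0∞)⁻¹ • ∑ i, Measure.dirac (v i)

lemma empiricalMeasure_apply {Z : Type*} [MeasurableSpace Z] (n : ℕ) (v : Fin n → Z) {S : Set Z}
    (hS : MeasurableSet S) : empiricalMeasure n v S = (n : ℝ≥0∞)⁻¹ * #{i | v i ∈ S} := by
  simp [empiricalMeasure, Measure.finsetSum_apply, Measure.dirac_apply' _ hS,
    Set.indicator_apply, Finset.sum_boole]

lemma card_filter_mem_le_card_filter_mem_thickening_add {Z ι : Type*} [PseudoMetricSpace Z]
    (s : Finset ι) (w w' : ι → Z) (ε : ℝ) (B : Set Z) :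
    #{i ∈ s | w i ∈ B} ≤
      #{i ∈ s | w' i ∈ thickening ε B} + #{i ∈ s | ε ≤ dist (w i) (w' i)} := by
  refine (card_le_card ?_).trans (card_union_le _ _)
  rw [← filter_or]
  refine monotone_filter_right s fun i _ hB => ?_
  by_cases hfar : ε ≤ dist (w i) (w' i)
  · exact Or.inr hfar
  · exact Or.inl (mem_thickening_iff.mpr ⟨w i, hB, by rw [dist_comm]; exact not_le.mp hfar⟩)

lemma empiricalMeasure_le_thickening_add {Z : Type*} [PseudoMetricSpace Z] [MeasurableSpace Z]
    [OpensMeasurableSpace Z] {n : ℕ} (hn : 0 < n) (w w' : Fin n → Z) {ε : ℝ}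
    (hcard : (#{i | ε ≤ dist (w i) (w' i)} : ℝ) / n ≤ ε) {B : Set Z} (hB : MeasurableSet B) :
    empiricalMeasure n w B ≤ empiricalMeasure n w' (thickening ε B) + ENNReal.ofReal ε := by
  have hfar : (n : ℝ≥0∞)⁻¹ * #{i | ε ≤ dist (w i) (w' i)} ≤ ENNReal.ofReal ε := by
    rw [mul_comm, ← div_eq_mul_inv, ← ENNReal.ofReal_natCast, ← ENNReal.ofReal_natCast n,
      ← ENNReal.ofReal_div_of_pos (Nat.cast_pos.mpr hn)]
    exact ENNReal.ofReal_le_ofReal hcard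
  rw [empiricalMeasure_apply n w hB, empiricalMeasure_apply n w' isOpen_thickening.measurableSet]
  calc (n : ℝ≥0∞)⁻¹ * #{i | w i ∈ B}
      ≤ (n : ℝ≥0∞)⁻¹ * (#{i | w' i ∈ thickening ε B} + #{i | ε ≤ dist (w i) (w' i)}) := by
        gcongr
        exact_mod_cast card_filter_mem_le_card_filter_mem_thickening_add _ w w' ε B
    _ ≤ (n : ℝ≥0∞)⁻¹ * #{i | w' i ∈ thickening ε B} + ENNReal.ofReal ε := by
        rw [mul_add]
        gcongr

lemma prohorov_empiricalMeasure_le_dn {Z : Type*} [MetricSpace Z] [MeasurableSpace Z]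
    [OpensMeasurableSpace Z] {n : ℕ} (hn : 0 < n) (w w' : Fin n → Z) :
    prohorov (empiricalMeasure n w) (empiricalMeasure n w') ≤ dn n w w' := by
  refine csInf_le_csInf ⟨0, fun ε hε => hε.1.le⟩ ⟨1, one_pos, ?_⟩ ?_
  · exact div_le_one_of_le₀ (by exact_mod_cast (card_filter_le _ _).trans_eq (card_fin n))
      n.cast_nonneg
  · rintro ε ⟨hε, hcard⟩
    exact ⟨hε, fun B hB => empiricalMeasure_le_thickening_add hn w w' hcard hB⟩

/-- If `d_n(w, w') ≤ δ` then the Prohorov distance between the corresponding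
empirical measures is at most `δ`. -/
theorem prohorov_empirical_le_of_dn_le
    {Z : Type*} [MetricSpace Z] [MeasurableSpace Z] [BorelSpace Z]
    (n : ℕ) (hn : 0 < n) (w w' : Fin n → Z) (δ : ℝ) (h : dn n w w' ≤ δ) :
    prohorov ((n : ℝ≥0∞)⁻¹ • ∑ i, Measure.dirac (w i))
      ((n : ℝ≥0∞)⁻¹ • ∑ i, Measure.dirac (w' i)) ≤ δ :=
  (prohorov_empiricalMeasure_le_dn hn w w').trans h
end

section
/- Let (Z, d) be a totally bounded metric space. Then the set BL_1(Z) of functions f : Z → ℝ with |f|_Lip + ‖f‖_∞ ≤ 1 is separable with respect to the supremum norm ‖·‖_∞. -/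
/-- The set of bounded Lipschitz functions on `Z` with BL-norm
(Lipschitz seminorm plus sup norm) at most `1`. -/
def BL1 (Z : Type*) [MetricSpace Z] : Set (Z → ℝ) :=
  {f | ∃ K C : ℝ, 0 ≤ K ∧ 0 ≤ C ∧ K + C ≤ 1 ∧
    (∀ x y : Z, |f x - f y| ≤ K * dist x y) ∧ (∀ x : Z, |f x| ≤ C)}

/-!
Restricting to a finite `δ`-net `t` of `Z` maps `BL₁(Z)` into the compact cube `[-1, 1]^t`, so
finitely many members of `BL₁(Z)` approximate every member to within `δ` on `t`. Since all these
functions are `1`-Lipschitz, agreement up to `δ` on `t` gives agreement up to `3δ` on all of `Z`.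
The union of such finite nets over the scales `1/(n+1)` is countable and uniformly dense.
-/

open Metric NNReal

theorem exists_countable_uniform_dense_of_finite_nets {Z : Type*} {S : Set (Z → ℝ)}
    (hnet : ∀ ε > (0 : ℝ), ∃ F ⊆ S, F.Finite ∧ ∀ f ∈ S, ∃ g ∈ F, ∀ x, |f x - g x| ≤ ε) :
    ∃ D : Set (Z → ℝ), D.Countable ∧ D ⊆ S ∧
      ∀ f ∈ S, ∀ ε > (0 : ℝ), ∃ g ∈ D, ∀ x, |f x - g x| ≤ ε := by
  choose F hFS hFfin hFnet using fun n : ℕ => hnet (1 / (n + 1)) Nat.one_div_pos_of_nat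
  refine ⟨⋃ n, F n, Set.countable_iUnion fun n => (hFfin n).countable, Set.iUnion_subset hFS, ?_⟩
  intro f hf ε hε
  obtain ⟨n, hn⟩ := exists_nat_one_div_lt hε
  obtain ⟨g, hg, hfg⟩ := hFnet n f hf
  exact ⟨g, Set.mem_iUnion_of_mem n hg, fun x => (hfg x).trans hn.le⟩

theorem exists_finite_subset_approx_on_finite {Z : Type*} {S : Set (Z → ℝ)} {t : Set Z}
    (ht : t.Finite) {M : ℝ} (hM : ∀ f ∈ S, ∀ z ∈ t, |f z| ≤ M) {δ : ℝ} (hδ : 0 < δ) :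
    ∃ F ⊆ S, F.Finite ∧ ∀ f ∈ S, ∃ g ∈ F, ∀ z ∈ t, |f z - g z| < δ := by
  have := ht.fintype
  let restrict : (Z → ℝ) → (t → ℝ) := fun f z => f z
  have hcube : restrict '' S ⊆ Set.univ.pi fun _ => Set.Icc (-M) M := by
    rintro _ ⟨f, hf, rfl⟩ z -
    exact abs_le.mp (hM f hf z z.2)
  have htb : TotallyBounded (restrict '' S) :=
    ((isCompact_univ_pi fun _ => isCompact_Icc).totallyBounded).subset hcube
  obtain ⟨F, hFS, hFfin, hcover⟩ := Set.exists_subset_image_finite_and.mp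
    (finite_approx_of_totallyBounded htb δ hδ)
  refine ⟨F, hFS, hFfin, fun f hf => ?_⟩
  obtain ⟨g, hg, hfg⟩ := Set.mem_iUnion₂.mp
    ((Set.biUnion_image ▸ hcover) (Set.mem_image_of_mem restrict hf))
  refine ⟨g, hg, fun z hz => ?_⟩
  rw [← Real.dist_eq]
  exact (dist_le_pi_dist (restrict f) (restrict g) ⟨z, hz⟩).trans_lt hfg

theorem exists_finite_uniform_net_of_lipschitzWith {Z : Type*} [PseudoMetricSpace Z]
    (hZ : TotallyBounded (Set.univ : Set Z)) {S : Set (Z → ℝ)} {L : ℝ≥0} {M : ℝ}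
    (hL : ∀ f ∈ S, LipschitzWith L f) (hM : ∀ f ∈ S, ∀ x, |f x| ≤ M) {ε : ℝ} (hε : 0 < ε) :
    ∃ F ⊆ S, F.Finite ∧ ∀ f ∈ S, ∃ g ∈ F, ∀ x, |f x - g x| ≤ ε := by
  set δ := ε / (2 * L + 1)
  have hδ : 0 < δ := by positivity
  obtain ⟨t, -, ht, hZt⟩ := finite_approx_of_totallyBounded hZ δ hδ
  obtain ⟨F, hFS, hFfin, hF⟩ :=
    exists_finite_subset_approx_on_finite ht (fun f hf z _ => hM f hf z) hδ
  refine ⟨F, hFS, hFfin, fun f hf => ?_⟩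
  obtain ⟨g, hg, hfg⟩ := hF f hf
  refine ⟨g, hg, fun x => ?_⟩
  obtain ⟨z, hz, hxz⟩ := Set.mem_iUnion₂.mp (hZt (Set.mem_univ x))
  have hf_xz := (hL f hf).dist_le_mul x z
  have hg_xz := (hL g (hFS hg)).dist_le_mul x z
  rw [mem_ball] at hxz
  rw [Real.dist_eq] at hf_xz hg_xz
  calc |f x - g x| ≤ |f x - f z| + |f z - g z| + |g x - g z| := by
        have := abs_sub_le (f x) (f z) (g x)
        have := abs_sub_le (f z) (g z) (g x)
        rw [abs_sub_comm (g z)] at this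
        linarith
    _ ≤ L * δ + δ + L * δ := by
        have := mul_le_mul_of_nonneg_left hxz.le L.coe_nonneg
        linarith [(hfg z hz).le]
    _ = (2 * L + 1) * δ := by ring
    _ = ε := mul_div_cancel₀ _ (by positivity)

theorem lipschitzWith_one_of_mem_BL1 {Z : Type*} [MetricSpace Z] {f : Z → ℝ} (hf : f ∈ BL1 Z) :
    LipschitzWith 1 f := by
  obtain ⟨K, C, -, hC, hKC, hK, -⟩ := hf
  refine LipschitzWith.of_dist_le_mul fun x y => ?_
  rw [Real.dist_eq, NNReal.coe_one]
  exact (hK x y).trans (mul_le_mul_of_nonneg_right (by linarith) dist_nonneg)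

theorem abs_le_one_of_mem_BL1 {Z : Type*} [MetricSpace Z] {f : Z → ℝ} (hf : f ∈ BL1 Z) (x : Z) :
    |f x| ≤ 1 := by
  obtain ⟨K, C, hK, -, hKC, -, hC⟩ := hf
  linarith [hC x]

/-- If `(Z,d)` is totally bounded, then `BL₁(Z)` is separable for the sup norm:
there is a countable subset which is uniformly dense in `BL₁(Z)`. -/
theorem BL1_separable {Z : Type*} [MetricSpace Z]
    (hZ : TotallyBounded (Set.univ : Set Z)) :
    ∃ D : Set (Z → ℝ), D.Countable ∧ D ⊆ BL1 Z ∧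
      ∀ f ∈ BL1 Z, ∀ ε > (0 : ℝ), ∃ g ∈ D, ∀ x : Z, |f x - g x| ≤ ε :=
  exists_countable_uniform_dense_of_finite_nets fun _ hε =>
    exists_finite_uniform_net_of_lipschitzWith hZ (fun _ => lipschitzWith_one_of_mem_BL1)
      (fun _ => abs_le_one_of_mem_BL1) hε
end
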